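/- Functional substitution is valid: ⊨ (∀x.φ) ∧ (∃y.φ' = y) → φ[φ'/x], where y ∉ FV(φ'); i.e., a universally quantified pattern may be instantiated with any pattern that is provably functional (evaluates to a singleton). Moreover, the unrestricted substitution axiom (∀x.φ) → φ[φ'/x] fails for arbitrary patterns φ'. -/

import Mathlib

namespace ML

structure Signature where
  S : Type
  Sym : Type
  n : Sym → ℕ
  arg : (f : Sym) → Fin (n f) → S
  res : Sym → S

inductive Pattern (σ : Signature) : σ.S → Type
  | var (s : σ.S) (x : ℕ) : Pattern σ s
  | app (f : σ.Sym) (args : ∀ i : Fin (σ.n f), Pattern σ (σ.arg f i)) : Pattern σ (σ.res f)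
  | neg {s : σ.S} (φ : Pattern σ s) : Pattern σ s
  | and {s : σ.S} (φ ψ : Pattern σ s) : Pattern σ s
  | ex {s : σ.S} (s' : σ.S) (x : ℕ) (φ : Pattern σ s) : Pattern σ s

namespace Pattern

variable {σ : Signature}

def or {s : σ.S} (φ ψ : Pattern σ s) : Pattern σ s := .neg (.and (.neg φ) (.neg ψ))

def imp {s : σ.S} (φ ψ : Pattern σ s) : Pattern σ s := .or (.neg φ) ψ

def piff {s : σ.S} (φ ψ : Pattern σ s) : Pattern σ s := .and (.imp φ ψ) (.imp ψ φ)

def all {s : σ.S} (s' : σ.S) (x : ℕ) (φ : Pattern σ s) : Pattern σ s :=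
  .neg (.ex s' x (.neg φ))

end Pattern

/-- Free variables of a pattern, as sort-variable pairs. -/
def FV {σ : Signature} : {s : σ.S} → Pattern σ s → Set ((s : σ.S) × ℕ)
  | _, .var s x => {⟨s, x⟩}
  | _, .app _ args => ⋃ i, FV (args i)
  | _, .neg φ => FV φ
  | _, .and φ ψ => FV φ ∪ FV ψ
  | _, .ex s' x φ => FV φ \ {⟨s', x⟩}

structure Model (σ : Signature) where
  carrier : σ.S → Type
  nonempty : ∀ s, Nonempty (carrier s)
  interp : (f : σ.Sym) → (∀ i : Fin (σ.n f), carrier (σ.arg f i)) → Set (carrier (σ.res f))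

def Val {σ : Signature} (M : Model σ) := (s : σ.S) → ℕ → M.carrier s

open Classical in
noncomputable def Val.upd {σ : Signature} {M : Model σ} (ρ : Val M) (s : σ.S) (x : ℕ)
    (a : M.carrier s) : Val M :=
  fun s' y => if h : s' = s ∧ y = x then cast (congrArg M.carrier h.1).symm a else ρ s' y

/-- Pattern evaluation: the set of elements matching the pattern. -/
noncomputable def eval {σ : Signature} {M : Model σ} :
    {s : σ.S} → Pattern σ s → Val M → Set (M.carrier s)
  | _, .var s x, ρ => {ρ s x}
  | _, .app f args, ρ =>
      { b | ∃ a : ∀ i, M.carrier (σ.arg f i), (∀ i, a i ∈ eval (args i) ρ) ∧ b ∈ M.interp f a }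
  | _, .neg φ, ρ => (eval φ ρ)ᶜ
  | _, .and φ ψ, ρ => eval φ ρ ∩ eval ψ ρ
  | _, .ex s' x φ, ρ => ⋃ a : M.carrier s', eval φ (ρ.upd s' x a)

def Sat {σ : Signature} (M : Model σ) {s : σ.S} (φ : Pattern σ s) : Prop :=
  ∀ ρ : Val M, eval φ ρ = Set.univ

def Valid {σ : Signature} {s : σ.S} (φ : Pattern σ s) : Prop :=
  ∀ M : Model σ, Sat M φ

end ML
namespace ML

variable {σ : Signature}

/-- The argument sort of a unary (definedness) symbol. -/
def arg1 (d : σ.Sym) (hn : σ.n d = 1) : σ.S := σ.arg d ⟨0, by omega⟩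

/-- Definedness applied to a pattern: `⌈φ⌉`. -/
noncomputable def ceil (d : σ.Sym) (hn : σ.n d = 1) (φ : Pattern σ (arg1 d hn)) :
    Pattern σ (σ.res d) :=
  .app d (fun j => cast (by
    have hj : j = (⟨0, by omega⟩ : Fin (σ.n d)) := Fin.ext (by have := j.isLt; omega)
    rw [hj]; rfl) φ)

/-- The definedness axiom pattern `⌈x⌉`. -/
noncomputable def defAx (d : σ.Sym) (hn : σ.n d = 1) : Pattern σ (σ.res d) :=
  ceil d hn (.var (arg1 d hn) 0)

/-- Totality `⌊φ⌋ ≡ ¬⌈¬φ⌉`. -/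
noncomputable def floor (d : σ.Sym) (hn : σ.n d = 1) (φ : Pattern σ (arg1 d hn)) :
    Pattern σ (σ.res d) :=
  .neg (ceil d hn (.neg φ))

/-- Equality pattern `φ = φ' ≡ ⌊φ ↔ φ'⌋`. -/
noncomputable def eqP (d : σ.Sym) (hn : σ.n d = 1) (φ φ' : Pattern σ (arg1 d hn)) :
    Pattern σ (σ.res d) :=
  floor d hn (φ.piff φ')

/-- Membership pattern `x ∈ φ ≡ ⌈x ∧ φ⌉`. -/
noncomputable def mem (d : σ.Sym) (hn : σ.n d = 1) (x : ℕ) (φ : Pattern σ (arg1 d hn)) :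
    Pattern σ (σ.res d) :=
  ceil d hn ((Pattern.var (arg1 d hn) x).and φ)

/-- The context `σ(φ₁,…,□,…,φₙ)` with `ψ` plugged into the `i`-th position. -/
def plug (f : σ.Sym) (i : Fin (σ.n f)) (args : ∀ j : Fin (σ.n f), Pattern σ (σ.arg f j))
    (ψ : Pattern σ (σ.arg f i)) : Pattern σ (σ.res f) :=
  .app f (fun j => if h : j = i then cast (by rw [h]) ψ else args j)

/-- Bound variables of a pattern. -/
def BV : {s : σ.S} → Pattern σ s → Set ((s : σ.S) × ℕ)
  | _, .var _ _ => ∅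
  | _, .app _ args => ⋃ i, BV (args i)
  | _, .neg φ => BV φ
  | _, .and φ ψ => BV φ ∪ BV ψ
  | _, .ex s' x φ => BV φ ∪ {⟨s', x⟩}

open Classical in
/-- Substitution `φ[ψ/x]` of pattern `ψ` for variable `x` of sort `t` (capture-free
provided the bound variables of `φ` are disjoint from the free variables of `ψ`). -/
noncomputable def subst : {s : σ.S} → Pattern σ s → (t : σ.S) → ℕ → Pattern σ t → Pattern σ s
  | _, .var s' y, t, x, ψ =>
      if h : s' = t ∧ y = x then cast (by rw [h.1]) ψ else .var s' y
  | _, .app f args, t, x, ψ => .app f (fun i => subst (args i) t x ψ)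
  | _, .neg φ, t, x, ψ => .neg (subst φ t x ψ)
  | _, .and φ₁ φ₂, t, x, ψ => .and (subst φ₁ t x ψ) (subst φ₂ t x ψ)
  | _, .ex s' y φ, t, x, ψ =>
      if s' = t ∧ y = x then .ex s' y φ else .ex s' y (subst φ t x ψ)

/-- Semantic entailment from a set of axiom patterns. -/
def Entails (F : Set ((s : σ.S) × Pattern σ s)) {s : σ.S} (φ : Pattern σ s) : Prop :=
  ∀ M : Model σ, (∀ ψ ∈ F, Sat M ψ.2) → Sat M φ

/-- A pattern is functional in `M` iff it evaluates to a singleton under every valuation. -/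
def Functional (M : Model σ) {s : σ.S} (φ : Pattern σ s) : Prop :=
  ∀ ρ : Val M, ∃ a : M.carrier s, eval φ ρ = {a}

end ML

/-! Under the definedness axiom, `∃y. φ' = y` holds (everywhere, or nowhere) exactly when
`φ'` evaluates to a singleton `{a}`. For such `φ'` and capture-free substitution, evaluating
`φ[φ'/x]` under `ρ` is evaluating `φ` under `ρ[a/x]`, so `∀x.φ` can be instantiated at `a`.
Without functionality this breaks: `∃y. x = y` holds for every `x`, but `∃y. ⊤ = y` fails as
soon as the carrier has two elements. -/

namespace ML

variable {σ : Signature} {M : Model σ} {d : σ.Sym} {hn : σ.n d = 1}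

namespace Val

variable (ρ : Val M)

@[simp]
theorem upd_apply_self (s : σ.S) (x : ℕ) (a : M.carrier s) : ρ.upd s x a s x = a := by
  simp [upd]

theorem upd_apply_of_ne {s s' : σ.S} {x y : ℕ} (a : M.carrier s) (h : ¬(s' = s ∧ y = x)) :
    ρ.upd s x a s' y = ρ s' y :=
  dif_neg h

theorem upd_comm {s t : σ.S} {y x : ℕ} (b : M.carrier s) (a : M.carrier t)
    (h : ¬(s = t ∧ y = x)) : (ρ.upd s y b).upd t x a = (ρ.upd t x a).upd s y b := by
  funext s' z
  simp only [upd]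
  split_ifs with h₁ h₂ <;> try rfl
  exact absurd ⟨h₂.1.symm.trans h₁.1, h₂.2.symm.trans h₁.2⟩ h

end Val

def Pattern.top {s : σ.S} (x : ℕ) : Pattern σ s := (Pattern.var s x).or (Pattern.var s x).neg

@[simp] theorem FV_top {s : σ.S} (x : ℕ) : FV (Pattern.top (s := s) x) = {⟨s, x⟩} := by
  simp [Pattern.top, Pattern.or, FV]

section Eval

variable {s : σ.S} (ρ : Val M)

@[simp] theorem eval_var (s : σ.S) (x : ℕ) : eval (M := M) (.var s x) ρ = {ρ s x} := rfl

@[simp] theorem eval_neg (φ : Pattern σ s) : eval (.neg φ) ρ = (eval φ ρ)ᶜ := rfl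

@[simp] theorem eval_and (φ ψ : Pattern σ s) :
    eval (.and φ ψ) ρ = eval φ ρ ∩ eval ψ ρ := rfl

theorem mem_eval_ex {s' : σ.S} {x : ℕ} {φ : Pattern σ s} {m : M.carrier s} :
    m ∈ eval (.ex s' x φ) ρ ↔ ∃ a, m ∈ eval φ (ρ.upd s' x a) :=
  Set.mem_iUnion

theorem mem_eval_all {s' : σ.S} {x : ℕ} {φ : Pattern σ s} {m : M.carrier s} :
    m ∈ eval (φ.all s' x) ρ ↔ ∀ a, m ∈ eval φ (ρ.upd s' x a) := by
  simp [Pattern.all, mem_eval_ex]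

theorem mem_eval_imp {φ ψ : Pattern σ s} {m : M.carrier s} :
    m ∈ eval (φ.imp ψ) ρ ↔ (m ∈ eval φ ρ → m ∈ eval ψ ρ) := by
  simp [Pattern.imp, Pattern.or, imp_iff_not_or]

theorem eval_piff_eq_univ_iff {φ ψ : Pattern σ s} :
    eval (φ.piff ψ) ρ = Set.univ ↔ eval φ ρ = eval ψ ρ := by
  rw [Set.eq_univ_iff_forall, Set.ext_iff]
  simp only [Pattern.piff, eval_and, Set.mem_inter_iff, mem_eval_imp, iff_def, forall_and]

theorem eval_top (x : ℕ) : eval (Pattern.top (s := s) x) ρ = Set.univ := by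
  simp [Pattern.top, Pattern.or]

end Eval

theorem sat_imp_iff {s : σ.S} {φ ψ : Pattern σ s} :
    Sat M (φ.imp ψ) ↔ ∀ ρ : Val M, eval φ ρ ⊆ eval ψ ρ := by
  simp only [Sat, Set.eq_univ_iff_forall, mem_eval_imp, Set.subset_def]

theorem eval_congr : ∀ {s : σ.S} (φ : Pattern σ s) {ρ₁ ρ₂ : Val M},
    (∀ v ∈ FV φ, ρ₁ v.1 v.2 = ρ₂ v.1 v.2) → eval φ ρ₁ = eval φ ρ₂
  | _, .var s x, _, _, h => by rw [eval_var, eval_var, h ⟨s, x⟩ rfl]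
  | _, .app f args, _, _, h => by
      have hargs i := eval_congr (args i) fun v hv => h v (Set.mem_iUnion.2 ⟨i, hv⟩)
      simp only [eval, hargs]
  | _, .neg φ, _, _, h => by rw [eval_neg, eval_neg, eval_congr φ h]
  | _, .and φ ψ, _, _, h => by
      rw [eval_and, eval_and, eval_congr φ fun v hv => h v (Or.inl hv),
        eval_congr ψ fun v hv => h v (Or.inr hv)]
  | _, .ex s' x φ, _, _, h => by
      refine Set.iUnion_congr fun a => eval_congr φ fun ⟨t, y⟩ hv => ?_
      by_cases hty : t = s' ∧ y = x
      · obtain ⟨rfl, rfl⟩ := hty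
        simp
      · rw [Val.upd_apply_of_ne _ _ hty, Val.upd_apply_of_ne _ _ hty]
        exact h _ ⟨hv, fun heq => hty (by cases heq; exact ⟨rfl, rfl⟩)⟩

theorem eval_upd_of_notMem_FV {s t : σ.S} {x : ℕ} {φ : Pattern σ s} (h : ⟨t, x⟩ ∉ FV φ)
    (ρ : Val M) (a : M.carrier t) : eval φ (ρ.upd t x a) = eval φ ρ :=
  eval_congr φ fun ⟨s', y⟩ hv => Val.upd_apply_of_ne ρ a
    fun ⟨hs, hy⟩ => h (by subst hs hy; exact hv)

theorem eval_subst : ∀ {s : σ.S} (φ : Pattern σ s) {t : σ.S} {x : ℕ} {ψ : Pattern σ t}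
    {ρ : Val M} {a : M.carrier t}, eval ψ ρ = {a} → (∀ v ∈ FV ψ, v ∉ BV φ) →
    eval (subst φ t x ψ) ρ = eval φ (ρ.upd t x a)
  | _, .var s' y, t, x, ψ, ρ, a, hψ, _ => by
      by_cases h : s' = t ∧ y = x
      · obtain ⟨rfl, rfl⟩ := h
        simpa [subst] using hψ
      · simp [subst, h, Val.upd_apply_of_ne]
  | _, .app f args, _, x, _, _, _, hψ, hcap => by
      have hargs i :=
        eval_subst (args i) (x := x) hψ fun v hv hb => hcap v hv (Set.mem_iUnion.2 ⟨i, hb⟩)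
      simp only [subst, eval, hargs]
  | _, .neg φ, _, x, _, _, _, hψ, hcap => by
      simp only [subst, eval_neg, eval_subst φ (x := x) hψ hcap]
  | _, .and φ₁ φ₂, _, x, _, _, _, hψ, hcap => by
      simp only [subst, eval_and,
        eval_subst φ₁ (x := x) hψ fun v hv hb => hcap v hv (Or.inl hb),
        eval_subst φ₂ (x := x) hψ fun v hv hb => hcap v hv (Or.inr hb)]
  | _, .ex s' y φ, t, x, ψ, ρ, a, hψ, hcap => by
      by_cases h : s' = t ∧ y = x
      · obtain ⟨rfl, rfl⟩ := h
        have hx : ⟨s', y⟩ ∉ FV (Pattern.ex s' y φ) := fun hv => hv.2 rfl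
        rw [subst, if_pos ⟨rfl, rfl⟩, eval_upd_of_notMem_FV hx]
      · rw [subst, if_neg h]
        refine Set.iUnion_congr fun b => ?_
        have hψb : eval ψ (ρ.upd s' y b) = {a} := by
          rw [eval_upd_of_notMem_FV (fun hv => hcap _ hv (Or.inr rfl)), hψ]
        rw [eval_subst φ hψb fun v hv hb => hcap v hv (Or.inl hb), Val.upd_comm _ _ _ h]

theorem subst_ceil (χ : Pattern σ (arg1 d hn)) (t : σ.S) (x : ℕ) (ψ : Pattern σ t) :
    subst (ceil d hn χ) t x ψ = ceil d hn (subst χ t x ψ) := by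
  simp only [ceil, subst]
  congr 1
  funext j
  obtain rfl : j = ⟨0, hn ▸ Nat.one_pos⟩ := Fin.ext (by have := j.isLt; omega)
  rfl

theorem subst_eqP (φ φ' : Pattern σ (arg1 d hn)) (t : σ.S) (x : ℕ) (ψ : Pattern σ t) :
    subst (eqP d hn φ φ') t x ψ = eqP d hn (subst φ t x ψ) (subst φ' t x ψ) := by
  simp only [eqP, floor, subst, subst_ceil, Pattern.piff, Pattern.imp, Pattern.or]

theorem mem_eval_ceil {χ : Pattern σ (arg1 d hn)} {ρ : Val M} {b : M.carrier (σ.res d)} :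
    b ∈ eval (ceil d hn χ) ρ ↔
      ∃ a : ∀ i, M.carrier (σ.arg d i), a ⟨0, hn ▸ Nat.one_pos⟩ ∈ eval χ ρ ∧
        b ∈ M.interp d a := by
  simp only [ceil, eval, Set.mem_ofPred_eq]
  refine exists_congr fun a => and_congr_left' ⟨fun h => ?_, fun h i => ?_⟩
  · exact cast_eq _ χ ▸ h ⟨0, _⟩
  · obtain rfl : i = ⟨0, by omega⟩ := Fin.ext (by have := i.isLt; omega)
    exact (cast_eq _ χ).symm ▸ h

section Definedness

variable (hdef : Sat M (defAx d hn)) {ρ : Val M} {b : M.carrier (σ.res d)}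
include hdef

theorem mem_eval_ceil_iff_nonempty {χ : Pattern σ (arg1 d hn)} :
    b ∈ eval (ceil d hn χ) ρ ↔ (eval χ ρ).Nonempty := by
  refine ⟨fun hb => ?_, fun ⟨c, hc⟩ => ?_⟩
  · obtain ⟨a, ha, -⟩ := mem_eval_ceil.1 hb
    exact ⟨_, ha⟩
  · -- the definedness axiom `⌈x⌉` at `x := c` puts `b` into `⌈{c}⌉ ⊆ ⌈χ⌉`
    obtain ⟨a, ha, hb⟩ := mem_eval_ceil.1 (Set.eq_univ_iff_forall.1 (hdef (ρ.upd _ 0 c)) b)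
    rw [eval_var, Val.upd_apply_self] at ha
    exact mem_eval_ceil.2 ⟨a, (show a _ = c from ha) ▸ hc, hb⟩

theorem mem_eval_floor_iff_eq_univ {χ : Pattern σ (arg1 d hn)} :
    b ∈ eval (floor d hn χ) ρ ↔ eval χ ρ = Set.univ := by
  rw [floor, eval_neg, Set.mem_compl_iff, mem_eval_ceil_iff_nonempty hdef, eval_neg,
    Set.not_nonempty_iff_eq_empty, Set.compl_empty_iff]

theorem mem_eval_eqP_iff {φ φ' : Pattern σ (arg1 d hn)} :
    b ∈ eval (eqP d hn φ φ') ρ ↔ eval φ ρ = eval φ' ρ := by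
  rw [eqP, mem_eval_floor_iff_eq_univ hdef, eval_piff_eq_univ_iff]

theorem mem_eval_ex_eqP_var_iff {φ : Pattern σ (arg1 d hn)} {y : ℕ}
    (hy : ⟨arg1 d hn, y⟩ ∉ FV φ) :
    b ∈ eval (.ex (arg1 d hn) y (eqP d hn φ (.var (arg1 d hn) y))) ρ ↔
      ∃ a, eval φ ρ = {a} := by
  simp only [mem_eval_ex, mem_eval_eqP_iff hdef, eval_upd_of_notMem_FV hy, eval_var,
    Val.upd_apply_self]

end Definedness

theorem sat_functional_subst (hdef : Sat M (defAx d hn)) {x y : ℕ} {φ : Pattern σ (σ.res d)}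
    {φ' : Pattern σ (arg1 d hn)} (hy : ⟨arg1 d hn, y⟩ ∉ FV φ')
    (hcap : ∀ v ∈ FV φ', v ∉ BV φ) :
    Sat M (((φ.all (arg1 d hn) x).and
        (.ex (arg1 d hn) y (eqP d hn φ' (.var (arg1 d hn) y)))).imp
      (subst φ (arg1 d hn) x φ')) := by
  refine sat_imp_iff.2 fun ρ m ⟨hall, hfun⟩ => ?_
  obtain ⟨a, ha⟩ := (mem_eval_ex_eqP_var_iff hdef hy).1 hfun
  rw [eval_subst φ ha hcap]
  exact (mem_eval_all ρ).1 hall a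

abbrev unarySignature : Signature := ⟨Unit, Unit, fun _ => 1, fun _ _ => (), fun _ => ()⟩

abbrev boolModel : Model unarySignature :=
  ⟨fun _ => Bool, fun _ => ⟨true⟩, fun _ _ => Set.univ⟩

theorem sat_defAx_boolModel : Sat boolModel (defAx () rfl) :=
  fun ρ => Set.eq_univ_of_forall fun _ => mem_eval_ceil.2 ⟨fun _ => ρ () 0, rfl, trivial⟩

noncomputable def exEqVar : Pattern unarySignature () :=
  .ex () 1 (eqP () rfl (.var _ 0) (.var _ 1))

theorem not_sat_all_imp_subst_top :
    ¬ Sat boolModel ((exEqVar.all () 0).imp (subst exEqVar () 0 (Pattern.top 0))) := by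
  have hsubst :
      subst exEqVar () 0 (Pattern.top 0) = .ex () 1 (eqP () rfl (.top 0) (.var _ 1)) := by
    simp [exEqVar, subst, subst_eqP]
  have hy {φ : Pattern unarySignature ()} (hφ : FV φ = {⟨(), 0⟩}) :
      ⟨arg1 () rfl, 1⟩ ∉ FV φ := by
    simp [hφ]
  intro hsat
  let ρ : Val boolModel := fun _ _ => true
  have hall : true ∈ eval (exEqVar.all () 0) ρ := (mem_eval_all _).2 fun _ =>
    (mem_eval_ex_eqP_var_iff sat_defAx_boolModel (hy rfl)).2 ⟨_, rfl⟩
  have htop := sat_imp_iff.1 hsat _ hall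
  rw [hsubst] at htop
  obtain ⟨a, ha⟩ := (mem_eval_ex_eqP_var_iff sat_defAx_boolModel (hy (FV_top 0))).1 htop
  rw [eval_top] at ha
  exact (Bool.not_eq_self a).1 (ha.subset (Set.mem_univ !a))

end ML

/-- Functional Substitution: `⊨ (∀x.φ) ∧ (∃y.φ' = y) → φ[φ'/x]`
with `y ∉ FV(φ')` and capture-free substitution; moreover the unrestricted axiom
`(∀x.φ) → φ[φ'/x]` fails for arbitrary patterns `φ'`. -/
theorem stmt19 {σ₀ : ML.Signature} (d : σ₀.Sym) (hn : σ₀.n d = 1)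
    (x y : ℕ) (φ : ML.Pattern σ₀ (σ₀.res d)) (φ' : ML.Pattern σ₀ (ML.arg1 d hn))
    (hy : (⟨ML.arg1 d hn, y⟩ : (t : σ₀.S) × ℕ) ∉ ML.FV φ')
    (hcap : ∀ v ∈ ML.FV φ', v ∉ ML.BV φ) :
    (∀ M : ML.Model σ₀, ML.Sat M (ML.defAx d hn) →
      ML.Sat M (((ML.Pattern.all (ML.arg1 d hn) x φ).and
          (ML.Pattern.ex (ML.arg1 d hn) y
            (ML.eqP d hn φ' (ML.Pattern.var (ML.arg1 d hn) y)))).imp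
        (ML.subst φ (ML.arg1 d hn) x φ'))) ∧
    ∃ (σ : ML.Signature) (M : ML.Model σ) (s sx : σ.S) (x' : ℕ)
      (ψ : ML.Pattern σ s) (ψ' : ML.Pattern σ sx),
      (∀ v ∈ ML.FV ψ', v ∉ ML.BV ψ) ∧
      ¬ ML.Sat M ((ML.Pattern.all sx x' ψ).imp (ML.subst ψ sx x' ψ')) := by
  refine ⟨fun _ hdef => ML.sat_functional_subst hdef hy hcap, ML.unarySignature, ML.boolModel,
    (), (), 0, ML.exEqVar, ML.Pattern.top 0, ?_, ML.not_sat_all_imp_subst_top⟩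
  simp [ML.exEqVar, ML.BV, ML.eqP, ML.floor, ML.ceil, ML.Pattern.piff, ML.Pattern.imp,
    ML.Pattern.or]
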